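/- arXiv:math/0411274 — 6 statements merged into one kernel-verified Lean document; each statement's English description precedes it below -/
import Mathlib

section
/- Let 0<q<1, let r be a positive integer, let k_1 > k_2 > ... > k_r > 0 be positive integers, and let z be a complex number with z ≠ q^{-k_i}[k_i]_q for all i = 1,...,r. Then ∏_{i=1}^r 1/([k_i]_q − z q^{k_i}) = Σ_{j=1}^r (1/([k_j]_q − z q^{k_j})) ∏_{i≠j} 1/[k_i − k_j]_q, where in the product over i ≠ j the quantity [k_i − k_j]_q is interpreted as (1 − q^{k_i − k_j})/(1 − q) (a negative number when k_i < k_j). -/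
/-- The `q`-analog of a natural number: `[k]_q = (1-q^k)/(1-q)`. -/
noncomputable def qnum (q : ℝ) (k : ℕ) : ℝ := (1 - q ^ k) / (1 - q)

/-- The `q`-analog of an integer (possibly negative): `[k]_q = (1-q^k)/(1-q)`. -/
noncomputable def qnumZ (q : ℝ) (k : ℤ) : ℝ := (1 - q ^ k) / (1 - q)

lemma partial_frac {r : ℕ} (hr : 0 < r) (c : Fin r → ℂ) (hc : Function.Injective c)
    (z : ℂ) (hz : ∀ i, z ≠ c i) :
    ∏ i, (c i - z)⁻¹ = ∑ j, (c j - z)⁻¹ * ∏ i ∈ Finset.univ.erase j, (c i - c j)⁻¹ := by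
  have hne : ∀ i, c i - z ≠ 0 := fun i => sub_ne_zero.mpr fun h => hz i h.symm
  have h1 : (1:ℂ) = ∑ j, ∏ i ∈ Finset.univ.erase j, ((c j - c i)⁻¹ * (z - c i)) := by
    have hb := Lagrange.sum_basis (v := c) hc.injOn ⟨⟨0, hr⟩, Finset.mem_univ _⟩
    have h2 := congrArg (Polynomial.eval z) hb
    simpa [Lagrange.basis, Lagrange.basisDivisor, Polynomial.eval_prod,
      Polynomial.eval_finset_sum] using h2.symm
  calc ∏ i, (c i - z)⁻¹ = (∏ i, (c i - z)⁻¹) * 1 := (mul_one _).symm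
    _ = ∑ j, (∏ i, (c i - z)⁻¹) * ∏ i ∈ Finset.univ.erase j, ((c j - c i)⁻¹ * (z - c i)) := by
        rw [h1, Finset.mul_sum]
    _ = ∑ j, (c j - z)⁻¹ * ∏ i ∈ Finset.univ.erase j, (c i - c j)⁻¹ := by
        refine Finset.sum_congr rfl fun j _ => ?_
        rw [← Finset.mul_prod_erase _ _ (Finset.mem_univ j), mul_assoc,
          ← Finset.prod_mul_distrib]
        congr 1
        refine Finset.prod_congr rfl fun i hi => ?_
        have hij : c j - c i ≠ 0 :=
          sub_ne_zero.mpr (hc.ne (Finset.mem_erase.mp hi).1).symm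
        rw [show z - c i = -(c i - z) by ring, mul_comm ((c j - c i)⁻¹), ← mul_assoc,
          mul_neg, inv_mul_cancel₀ (hne i), show c i - c j = -(c j - c i) by ring, inv_neg]
        ring

/-- The partial fraction decomposition used in the proof of the q-sum formula. -/
theorem q_partial_fractions (q : ℝ) (hq0 : 0 < q) (hq1 : q < 1)
    (r : ℕ) (hr : 0 < r) (k : Fin r → ℕ)
    (hdec : ∀ i j : Fin r, i < j → k j < k i) (hpos : ∀ j, 0 < k j)
    (z : ℂ) (hz : ∀ i : Fin r, z ≠ (q : ℂ) ^ (-(k i : ℤ)) * (qnum q (k i) : ℂ)) :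
    ∏ i : Fin r, 1 / ((qnum q (k i) : ℂ) - z * (q : ℂ) ^ (k i))
      = ∑ j : Fin r, (1 / ((qnum q (k j) : ℂ) - z * (q : ℂ) ^ (k j))) *
          ∏ i ∈ Finset.univ.erase j, 1 / ((qnumZ q ((k i : ℤ) - (k j : ℤ))) : ℂ) := by
  have hq0' : (q : ℂ) ≠ 0 := by exact_mod_cast hq0.ne'
  have hq1' : (1 : ℂ) - (q : ℂ) ≠ 0 := by
    intro h
    have : (q : ℂ) = 1 := by linear_combination -h
    exact absurd (by exact_mod_cast this) hq1.ne
  set c : Fin r → ℂ := fun i => (q : ℂ) ^ (-(k i : ℤ)) * (qnum q (k i) : ℂ) with hcdef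
  have hkey : ∀ n : ℕ, ((q : ℂ)) ^ n * (q : ℂ) ^ (-(n : ℤ)) = 1 := by
    intro n
    rw [← zpow_natCast, ← zpow_add₀ hq0']
    simp
  have hc' : ∀ i, c i = ((q : ℂ) ^ (-(k i : ℤ)) - 1) / (1 - (q : ℂ)) := by
    intro i
    simp only [hcdef, qnum]
    push_cast
    rw [mul_div_assoc', mul_sub, mul_one]
    congr 2
    rw [mul_comm]
    exact hkey (k i)
  have hkinj : Function.Injective k := by
    intro i j hij
    by_contra h
    rcases lt_or_gt_of_ne h with h' | h'
    · exact absurd hij.symm (hdec i j h').ne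
    · exact absurd hij (hdec j i h').ne
  have hcinj : Function.Injective c := by
    intro i j hij
    apply hkinj
    have := hq1'
    rw [hc', hc', div_eq_div_iff hq1' hq1'] at hij
    have h2 : (q : ℂ) ^ (-(k i : ℤ)) = (q : ℂ) ^ (-(k j : ℤ)) := by
      have h4 := mul_right_cancel₀ hq1' hij
      linear_combination h4
    have h3 : -(k i : ℤ) = -(k j : ℤ) := by
      have hq01 : (0:ℝ) < q := hq0
      have : (q : ℝ) ^ (-(k i : ℤ)) = (q : ℝ) ^ (-(k j : ℤ)) := by
        exact_mod_cast h2
      exact zpow_right_injective₀ hq01 hq1.ne this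
    omega
  -- key algebraic identities
  have hA : ∀ i, ((qnum q (k i) : ℂ) - z * (q : ℂ) ^ (k i))
      = (q : ℂ) ^ (k i) * (c i - z) := by
    intro i
    have : (q : ℂ) ^ (k i) * c i = (qnum q (k i) : ℂ) := by
      rw [hcdef]
      dsimp only
      rw [← mul_assoc, hkey, one_mul]
    rw [mul_sub, this]
    ring
  have hB : ∀ i j : Fin r, ((qnumZ q ((k i : ℤ) - (k j : ℤ)) : ℝ) : ℂ)
      = (q : ℂ) ^ (k i) * (c i - c j) := by
    intro i j
    rw [hc', hc']
    simp only [qnumZ]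
    push_cast
    rw [div_sub_div_same, ← mul_div_assoc]
    congr 1
    have e1 : (q:ℂ) ^ ((k i : ℤ)) * (q:ℂ) ^ (-(k i : ℤ)) = 1 := by
      rw [← zpow_add₀ hq0']; simp
    have e2 : (q:ℂ) ^ ((k i : ℤ)) * (q:ℂ) ^ (-(k j : ℤ)) = (q:ℂ) ^ ((k i : ℤ) - (k j : ℤ)) := by
      rw [← zpow_add₀ hq0', sub_eq_add_neg]
    rw [← zpow_natCast (q:ℂ) (k i)]
    linear_combination e2 - e1
  have hz' : ∀ i, z ≠ c i := hz
  have hpf := partial_frac hr c hcinj z hz'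
  calc ∏ i : Fin r, 1 / ((qnum q (k i) : ℂ) - z * (q : ℂ) ^ (k i))
      = (∏ i : Fin r, ((q : ℂ) ^ (k i))⁻¹) * ∏ i, (c i - z)⁻¹ := by
        rw [← Finset.prod_mul_distrib]
        refine Finset.prod_congr rfl fun i _ => ?_
        rw [hA, one_div, mul_inv]
    _ = (∏ i : Fin r, ((q : ℂ) ^ (k i))⁻¹) *
          ∑ j, (c j - z)⁻¹ * ∏ i ∈ Finset.univ.erase j, (c i - c j)⁻¹ := by rw [hpf]
    _ = ∑ j : Fin r, (1 / ((qnum q (k j) : ℂ) - z * (q : ℂ) ^ (k j))) *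
          ∏ i ∈ Finset.univ.erase j, 1 / ((qnumZ q ((k i : ℤ) - (k j : ℤ))) : ℂ) := by
        rw [Finset.mul_sum]
        refine Finset.sum_congr rfl fun j _ => ?_
        rw [hA j, one_div, mul_inv]
        have hprod : ∀ i ∈ Finset.univ.erase j,
            (1 : ℂ) / ((qnumZ q ((k i : ℤ) - (k j : ℤ)) : ℝ) : ℂ)
              = ((q : ℂ) ^ (k i))⁻¹ * (c i - c j)⁻¹ := by
          intro i hi
          rw [hB i j, one_div, mul_inv]
        rw [Finset.prod_congr rfl hprod, Finset.prod_mul_distrib,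
          ← Finset.mul_prod_erase (Finset.univ) (fun i => ((q : ℂ) ^ (k i))⁻¹)
            (Finset.mem_univ j)]
        ring
end

section
/- Let 0<q<1 and let m and k be integers with m ≥ 1 and k ≥ 0. Then Σ_{b>k} q^{m+b}/([m+b]_q [b]_q) = (q^m/[m]_q) Σ_{c=1}^m q^{c+k}/[c+k]_q, where the left-hand sum is over all integers b > k. -/
/-- Telescoping evaluation of the basic tail sum `A(m,1,k)`. -/
theorem q_tail_sum (q : ℝ) (hq0 : 0 < q) (hq1 : q < 1) (m k : ℕ) (hm : 1 ≤ m) :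
    (∑' b : {b : ℕ // k < b}, q ^ (m + b.1) / (qnum q (m + b.1) * qnum q b.1))
      = (q ^ m / qnum q m) * ∑ c ∈ Finset.Icc 1 m, q ^ (c + k) / qnum q (c + k) := by
  set g : ℕ → ℝ := fun b => q ^ b / qnum q b with hg
  have h1q : (0:ℝ) < 1 - q := by linarith
  have hpow : ∀ n : ℕ, 1 ≤ n → q ^ n < 1 := fun n hn =>
    pow_lt_one₀ hq0.le hq1 (by omega)
  have hqn : ∀ n : ℕ, 1 ≤ n → 0 < qnum q n := by
    intro n hn
    have := hpow n hn
    exact div_pos (by linarith) h1q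
  -- summability of g
  have hgle : ∀ b : ℕ, g b ≤ q ^ b := by
    intro b
    rcases Nat.eq_zero_or_pos b with rfl | hb
    · simp [hg, qnum]
    · have h1 : 0 < qnum q b := hqn b hb
      have hq' : q ^ b ≤ q := by
        calc q ^ b ≤ q ^ 1 := pow_le_pow_of_le_one hq0.le hq1.le hb
        _ = q := pow_one q
      have h2 : (1:ℝ) ≤ qnum q b := by
        rw [qnum, le_div_iff₀ h1q]; linarith
      calc g b ≤ q ^ b / 1 := by
            apply div_le_div_of_nonneg_left (by positivity) one_pos h2
      _ = q ^ b := div_one _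
  have hgnn : ∀ b : ℕ, 0 ≤ g b := by
    intro b
    rcases Nat.eq_zero_or_pos b with rfl | hb
    · simp [hg, qnum]
    · exact div_nonneg (by positivity) (hqn b hb).le
  have hsum : Summable g :=
    Summable.of_nonneg_of_le hgnn hgle (summable_geometric_of_lt_one hq0.le hq1)
  -- key per-term identity
  have key : ∀ b : ℕ, 1 ≤ b →
      q ^ (m + b) / (qnum q (m + b) * qnum q b)
        = q ^ m / qnum q m * (g b - g (b + m)) := by
    intro b hb
    have h1 : (1 - q ^ b) ≠ 0 := by have := hpow b hb; linarith
    have h2 : (1 - q ^ m) ≠ 0 := by have := hpow m hm; linarith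
    have h3 : (1 - q ^ (m + b)) ≠ 0 := by have := hpow (m+b) (by omega); linarith
    have h4 : (1 - q ^ (b + m)) ≠ 0 := by rwa [add_comm b m]
    have h5 : (1 - q) ≠ 0 := by linarith
    simp only [hg, qnum]
    rw [show b + m = m + b from add_comm b m]
    field_simp
    ring
  -- rewrite the tsum termwise and pull out the constant
  let e : ℕ ≃ {b : ℕ // k < b} :=
    { toFun := fun n => ⟨n + (k + 1), by omega⟩
      invFun := fun b => b.1 - (k + 1)
      left_inv := fun n => by simp
      right_inv := fun b => by
        have := b.2
        exact Subtype.ext (by simp; omega) }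
  have step1 : (∑' b : {b : ℕ // k < b}, q ^ (m + b.1) / (qnum q (m + b.1) * qnum q b.1))
      = q ^ m / qnum q m * ∑' b : {b : ℕ // k < b}, (g b.1 - g (b.1 + m)) := by
    rw [← tsum_mul_left]
    exact tsum_congr fun b => key b.1 (by have := b.2; omega)
  rw [step1]
  congr 1
  rw [← e.tsum_eq]
  have hsum1 : Summable (fun n : ℕ => g (n + (k + 1))) :=
    (summable_nat_add_iff (k+1)).2 hsum
  have hsum2 : Summable (fun n : ℕ => g (n + (k + 1 + m))) :=
    (summable_nat_add_iff (k+1+m)).2 hsum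
  have : (∑' n : ℕ, (g (e n).1 - g ((e n).1 + m)))
      = (∑' n : ℕ, g (n + (k + 1))) - ∑' n : ℕ, g (n + (k + 1 + m)) := by
    rw [← Summable.tsum_sub hsum1 hsum2]
    apply tsum_congr
    intro n
    have h1 : (e n).1 = n + (k + 1) := rfl
    rw [h1]
    congr 2
    omega
  rw [this]
  have A := Summable.sum_add_tsum_nat_add (f := g) (k + 1) hsum
  have B := Summable.sum_add_tsum_nat_add (f := g) (k + 1 + m) hsum
  have hAB : (∑' n : ℕ, g (n + (k + 1))) - (∑' n : ℕ, g (n + (k + 1 + m)))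
      = (∑ i ∈ Finset.range (k + 1 + m), g i) - ∑ i ∈ Finset.range (k + 1), g i := by
    linarith
  rw [hAB]
  rw [← Finset.sum_Ico_eq_sub _ (by omega : k + 1 ≤ k + 1 + m)]
  rw [Finset.sum_Ico_eq_sum_range]
  have : Finset.Icc 1 m = Finset.Ico 1 (m + 1) := by
    ext x; simp [Nat.lt_succ_iff]
  rw [this, Finset.sum_Ico_eq_sum_range]
  simp only [Nat.add_sub_cancel_left, Nat.add_sub_cancel]
  apply Finset.sum_congr rfl
  intro i _
  have h1 : k + 1 + i = (1 + i) + k := by omega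
  rw [h1]
end

section
/- Let 0<q<1 and let m, n, k be integers with m ≥ 1, n ≥ 1, k ≥ 0. Define A(m,n,k) := Σ_{b_1>b_2>...>b_n>k} (q^{m+b_1}/[m+b_1]_q) ∏_{j=1}^n 1/[b_j]_q, the sum being over all n-tuples of integers b_1 > b_2 > ... > b_n > k. Then A(m,n,k) = (q^m/[m]_q) Σ_{m ≥ c_1 ≥ c_2 ≥ ... ≥ c_n ≥ 1} (q^{c_n+k}/[c_n+k]_q) ∏_{j=1}^{n-1} q^{c_j}/[c_j]_q, where the sum on the right is over all weakly decreasing n-tuples of integers c_1,...,c_n with m ≥ c_1 ≥ ... ≥ c_n ≥ 1. -/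
open Finset
open scoped ENNReal

namespace Fin

variable {α : Type*} [Preorder α] {n : ℕ}

theorem strictAnti_snoc_iff {f : Fin n → α} {a : α} :
    StrictAnti (snoc f a : Fin (n + 1) → α) ↔ StrictAnti f ∧ ∀ j, a < f j := by
  simp [StrictAnti, forall_fin_succ', castSucc_lt_last, not_lt.2 (le_last _), forall_and]

theorem antitone_cons_iff {f : Fin n → α} {a : α} :
    Antitone (cons a f : Fin (n + 1) → α) ↔ Antitone f ∧ ∀ j, f j ≤ a := by
  simp [Antitone, forall_fin_succ, and_comm]

theorem strictAnti_snoc_and_forall_lt_iff {c : Fin n → α} {x k : α} :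
    (StrictAnti (snoc c x : Fin (n + 1) → α) ∧ ∀ j, k < (snoc c x : Fin (n + 1) → α) j) ↔
      k < x ∧ StrictAnti c ∧ ∀ j, x < c j := by
  simp only [strictAnti_snoc_iff, forall_fin_succ', snoc_castSucc, snoc_last]
  exact ⟨fun ⟨h, _, hx⟩ => ⟨hx, h⟩, fun ⟨hx, h⟩ => ⟨h, fun j => hx.trans (h.2 j), hx⟩⟩

theorem antitone_cons_and_forall_mem_Icc_iff {c : Fin n → α} {x a b : α} :
    (Antitone (cons x c : Fin (n + 1) → α) ∧ ∀ j, (cons x c : Fin (n + 1) → α) j ∈ Set.Icc a b) ↔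
      x ∈ Set.Icc a b ∧ Antitone c ∧ ∀ j, c j ∈ Set.Icc a x := by
  simp only [antitone_cons_iff, forall_fin_succ, cons_zero, cons_succ, Set.mem_Icc]
  exact ⟨fun ⟨⟨hc, hx⟩, hxab, h⟩ => ⟨hxab, hc, fun j => ⟨(h j).1, hx j⟩⟩,
    fun ⟨hxab, hc, h⟩ => ⟨⟨hc, fun j => (h j).2⟩, hxab, fun j => ⟨(h j).1, (h j).2.trans hxab.2⟩⟩⟩

theorem prod_univ_erase_last {M : Type*} [CommMonoid M] (f : Fin (n + 1) → M) :
    ∏ j ∈ univ.erase (last n), f j = ∏ j : Fin n, f j.castSucc := by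
  rw [show univ.erase (last n) = univ.map castSuccEmb by ext; simp [exists_castSucc_eq], prod_map]
  rfl

end Fin

def Equiv.subtypeProdAndEquivSigma {α β : Type*} (p : α → Prop) (r : α → β → Prop) :
    {x : α × β // p x.1 ∧ r x.1 x.2} ≃ Σ a : {a // p a}, {b // r a b} where
  toFun x := ⟨⟨x.1.1, x.2.1⟩, x.1.2, x.2.2⟩
  invFun s := ⟨(s.1.1, s.2.1), s.1.2, s.2.2⟩

theorem ENNReal.tsum_subtype_of_equiv_prod {α β γ : Type*} (e : α × β ≃ γ) {P : γ → Prop}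
    {p : α → Prop} {r : α → β → Prop} (h : ∀ a b, P (e (a, b)) ↔ p a ∧ r a b)
    (F : γ → ℝ≥0∞) :
    ∑' x : {x // P x}, F x = ∑' (a : {a // p a}) (b : {b // r a b}), F (e (a.1, b.1)) := by
  let e' : {x // P x} ≃ Σ a : {a // p a}, {b // r a b} :=
    (e.symm.subtypeEquiv fun x => by rw [← h, Prod.mk.eta, e.apply_symm_apply]).trans
      (Equiv.subtypeProdAndEquivSigma p r)
  calc ∑' x : {x // P x}, F x = ∑' s : Σ a : {a // p a}, {b // r a b}, F (e (s.1.1, s.2.1)) := by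
        rw [← e'.tsum_eq]; simp [e', Equiv.subtypeProdAndEquivSigma]
    _ = _ := ENNReal.tsum_sigma' _

theorem ENNReal.tsum_mul_finsetSum {α ι : Type*} (h : α → ℝ≥0∞) (s : Finset ι)
    (F : ι → α → ℝ≥0∞) : ∑' x, h x * ∑ c ∈ s, F c x = ∑ c ∈ s, ∑' x, h x * F c x := by
  simp_rw [Finset.mul_sum]
  exact Summable.tsum_finsetSum fun _ _ => ENNReal.summable

theorem tsum_subtype_lt_eq_tsum_nat_add {M : Type*} [AddCommMonoid M] [TopologicalSpace M]
    (f : ℕ → M) (k : ℕ) :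
    ∑' b : {b // k < b}, f b.1 = ∑' i, f (i + (k + 1)) := by
  let e : ℕ ≃ {b // k < b} :=
    { toFun i := ⟨i + (k + 1), by omega⟩
      invFun b := b.1 - (k + 1)
      left_inv i := by simp
      right_inv b := Subtype.ext (Nat.sub_add_cancel b.2) }
  exact (e.tsum_eq (fun b => f b)).symm

theorem sum_range_add_succ_eq_sum_Icc {M : Type*} [AddCommMonoid M] (f : ℕ → M) (m k : ℕ) :
    ∑ i ∈ range m, f (i + (k + 1)) = ∑ c ∈ Icc 1 m, f (c + k) := by
  rw [← Ico_add_one_right_eq_Icc, ← zero_add 1, ← sum_Ico_add' (fun c => f (c + k)), range_eq_Ico]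
  simp only [add_right_comm, add_assoc]

section TupleSums

open Fin

variable (g h : ℕ → ℝ≥0∞)

/-- For `g a = q^a/[a]_q` and `h a = 1/[a]_q` this is `A(m, n + 1, k)`: tuples have `n + 1`
entries. -/
noncomputable def strictAntiSum (m n k : ℕ) : ℝ≥0∞ :=
  ∑' b : {b : Fin (n + 1) → ℕ // StrictAnti b ∧ ∀ j, k < b j}, g (m + b.1 0) * ∏ j, h (b.1 j)

noncomputable def antitoneSum (m n k : ℕ) : ℝ≥0∞ :=
  ∑' c : {c : Fin (n + 1) → ℕ // Antitone c ∧ ∀ j, c j ∈ Set.Icc 1 m},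
    g (c.1 (last n) + k) * ∏ j ∈ univ.erase (last n), g (c.1 j)

theorem strictAntiSum_zero (m k : ℕ) :
    strictAntiSum g h m 0 k = ∑' b : {b // k < b}, h b.1 * g (m + b.1) := by
  rw [strictAntiSum, ← ((Equiv.funUnique (Fin 1) ℕ).symm.subtypeEquiv (p := (k < ·))
    fun b => ?_).tsum_eq]
  · simp [mul_comm]
  · simp [Subsingleton.strictAnti]

theorem strictAntiSum_succ (m n k : ℕ) :
    strictAntiSum g h m (n + 1) k = ∑' x : {x // k < x}, h x * strictAntiSum g h m n x := by
  rw [strictAntiSum, ENNReal.tsum_subtype_of_equiv_prod (snocEquiv fun _ => ℕ)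
    (fun _ _ => strictAnti_snoc_and_forall_lt_iff) fun b => g (m + b 0) * ∏ j, h (b j)]
  refine tsum_congr fun x => ?_
  rw [strictAntiSum, ← ENNReal.tsum_mul_left]
  refine tsum_congr fun c => ?_
  simp only [snocEquiv_apply, snoc_apply_zero, prod_univ_castSucc (n := n + 1), snoc_castSucc,
    snoc_last]
  ring

theorem antitoneSum_zero (m k : ℕ) :
    antitoneSum g m 0 k = ∑ c ∈ Icc 1 m, g (c + k) := by
  rw [antitoneSum, ← Finset.tsum_subtype' (Icc 1 m) fun c => g (c + k), coe_Icc,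
    ← ((Equiv.funUnique (Fin 1) ℕ).symm.subtypeEquiv (p := (· ∈ Set.Icc 1 m))
      fun b => ?_).tsum_eq]
  · simp
  · simp [Subsingleton.antitone]

theorem antitoneSum_succ (m n k : ℕ) :
    antitoneSum g m (n + 1) k = ∑ x ∈ Icc 1 m, g x * antitoneSum g x n k := by
  rw [antitoneSum, ENNReal.tsum_subtype_of_equiv_prod (consEquiv fun _ => ℕ)
    (fun _ _ => antitone_cons_and_forall_mem_Icc_iff)
    fun c => g (c (last (n + 1)) + k) * ∏ j ∈ univ.erase (last (n + 1)), g (c j),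
    ← Finset.tsum_subtype' (Icc 1 m) fun x => g x * antitoneSum g x n k, coe_Icc]
  refine tsum_congr fun x => ?_
  rw [antitoneSum, ← ENNReal.tsum_mul_left]
  refine tsum_congr fun c => ?_
  simp only [consEquiv_apply, cons_last, prod_univ_erase_last, prod_univ_succ, castSucc_zero,
    cons_zero, castSucc_succ, cons_succ]
  ring

variable {g h}

theorem tsum_mul_antitoneSum
    (hgh : ∀ m, 1 ≤ m → ∀ k,
      ∑' b : {b // k < b}, h b.1 * g (m + b.1) = g m * ∑ c ∈ Icc 1 m, g (c + k))
    (n m k : ℕ) : ∑' x : {x // k < x}, h x * antitoneSum g m n x = antitoneSum g m (n + 1) k := by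
  induction n generalizing m with
  | zero =>
    simp only [antitoneSum_zero, antitoneSum_succ, ENNReal.tsum_mul_finsetSum]
    exact Finset.sum_congr rfl fun c hc => hgh c (mem_Icc.1 hc).1 k
  | succ n ih =>
    rw [antitoneSum_succ g m (n + 1)]
    simp_rw [antitoneSum_succ g m n, ENNReal.tsum_mul_finsetSum, mul_left_comm (h _),
      ENNReal.tsum_mul_left, ih]

theorem strictAntiSum_eq_mul_antitoneSum
    (hgh : ∀ m, 1 ≤ m → ∀ k,
      ∑' b : {b // k < b}, h b.1 * g (m + b.1) = g m * ∑ c ∈ Icc 1 m, g (c + k))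
    {m : ℕ} (hm : 1 ≤ m) (n k : ℕ) : strictAntiSum g h m n k = g m * antitoneSum g m n k := by
  induction n generalizing k with
  | zero => rw [strictAntiSum_zero, antitoneSum_zero, hgh m hm]
  | succ n ih =>
    simp only [strictAntiSum_succ, ih, mul_left_comm (h _), ENNReal.tsum_mul_left,
      tsum_mul_antitoneSum hgh]

end TupleSums

section QTerms

variable {q : ℝ}

theorem qnum_pos (hq0 : 0 ≤ q) (hq1 : q < 1) {a : ℕ} (ha : a ≠ 0) : 0 < qnum q a :=
  div_pos (sub_pos.2 (pow_lt_one₀ hq0 hq1 ha)) (sub_pos.2 hq1)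

theorem qnum_nonneg (hq0 : 0 ≤ q) (hq1 : q < 1) (a : ℕ) : 0 ≤ qnum q a := by
  rcases eq_or_ne a 0 with rfl | ha
  · simp [qnum]
  · exact (qnum_pos hq0 hq1 ha).le

theorem pow_div_qnum_nonneg (hq0 : 0 ≤ q) (hq1 : q < 1) (a : ℕ) : 0 ≤ q ^ a / qnum q a :=
  div_nonneg (pow_nonneg hq0 a) (qnum_nonneg hq0 hq1 a)

theorem pow_div_qnum_le_pow (hq0 : 0 ≤ q) (hq1 : q < 1) (a : ℕ) : q ^ a / qnum q a ≤ q ^ a := by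
  rcases eq_or_ne a 0 with rfl | ha
  · simp [qnum]
  · refine div_le_self (pow_nonneg hq0 a) ?_
    rw [qnum, le_div_iff₀ (sub_pos.2 hq1), one_mul]
    exact sub_le_sub_left (pow_le_of_le_one hq0 hq1.le ha) 1

theorem one_div_qnum_mul_add_mul (hq0 : 0 ≤ q) (hq1 : q < 1) {m b : ℕ} (hm : m ≠ 0)
    (hb : b ≠ 0) :
    1 / qnum q b * (q ^ (m + b) / qnum q (m + b)) +
        q ^ m / qnum q m * (q ^ (m + b) / qnum q (m + b)) =
      q ^ m / qnum q m * (q ^ b / qnum q b) := by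
  have hne : ∀ {a : ℕ}, a ≠ 0 → 1 - q ^ a ≠ 0 := fun ha => (sub_pos.2 (pow_lt_one₀ hq0 hq1 ha)).ne'
  have : 1 - q ^ b * q ^ m ≠ 0 := by rw [← pow_add]; exact hne (by omega)
  have := hne hm
  have := hne hb
  have : 1 - q ≠ 0 := (sub_pos.2 hq1).ne'
  simp only [qnum, pow_add]
  field_simp
  ring

noncomputable def qTerm (q : ℝ) (a : ℕ) : ℝ≥0∞ := ENNReal.ofReal (q ^ a / qnum q a)

noncomputable def qRecip (q : ℝ) (a : ℕ) : ℝ≥0∞ := ENNReal.ofReal (1 / qnum q a)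

theorem qRecip_mul_qTerm_add (hq0 : 0 ≤ q) (hq1 : q < 1) {m b : ℕ} (hm : m ≠ 0) (hb : b ≠ 0) :
    qRecip q b * qTerm q (m + b) + qTerm q m * qTerm q (m + b) = qTerm q m * qTerm q b := by
  have hu := pow_div_qnum_nonneg hq0 hq1
  have hr : 0 ≤ 1 / qnum q b := one_div_nonneg.2 (qnum_nonneg hq0 hq1 b)
  rw [qTerm, qTerm, qTerm, qRecip, ← ENNReal.ofReal_mul hr, ← ENNReal.ofReal_mul (hu m),
    ← ENNReal.ofReal_mul (hu m),
    ← ENNReal.ofReal_add (mul_nonneg hr (hu _)) (mul_nonneg (hu m) (hu _)),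
    one_div_qnum_mul_add_mul hq0 hq1 hm hb]

theorem tsum_qTerm_add_ne_top (hq0 : 0 ≤ q) (hq1 : q < 1) (c : ℕ) : ∑' i, qTerm q (i + c) ≠ ⊤ :=
  ((summable_nat_add_iff c).2 <| (summable_geometric_of_lt_one hq0 hq1).of_nonneg_of_le
    (pow_div_qnum_nonneg hq0 hq1) (pow_div_qnum_le_pow hq0 hq1)).tsum_ofReal_ne_top

theorem tsum_qRecip_mul_qTerm (hq0 : 0 ≤ q) (hq1 : q < 1) {m : ℕ} (hm : 1 ≤ m) (k : ℕ) :
    ∑' b : {b // k < b}, qRecip q b.1 * qTerm q (m + b.1) =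
      qTerm q m * ∑ c ∈ Icc 1 m, qTerm q (c + k) := by
  have htel : ∑' i, qTerm q (i + (k + 1)) =
      ∑ i ∈ range m, qTerm q (i + (k + 1)) + ∑' i, qTerm q (i + m + (k + 1)) :=
    (ENNReal.summable.sum_add_tsum_nat_add' (f := fun i => qTerm q (i + (k + 1)))).symm
  have hsplit : ∑' i, qRecip q (i + (k + 1)) * qTerm q (m + (i + (k + 1))) +
      qTerm q m * ∑' i, qTerm q (i + m + (k + 1)) = qTerm q m * ∑' i, qTerm q (i + (k + 1)) := by
    rw [← ENNReal.tsum_mul_left, ← ENNReal.tsum_mul_left, ← ENNReal.tsum_add]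
    refine tsum_congr fun i => ?_
    rw [show i + m + (k + 1) = m + (i + (k + 1)) by ring]
    exact qRecip_mul_qTerm_add hq0 hq1 (by omega) (by omega)
  have hfin : qTerm q m * ∑' i, qTerm q (i + m + (k + 1)) ≠ ⊤ :=
    ENNReal.mul_ne_top ENNReal.ofReal_ne_top
      (by simpa only [add_assoc] using tsum_qTerm_add_ne_top hq0 hq1 (m + (k + 1)))
  rw [htel, mul_add] at hsplit
  rw [tsum_subtype_lt_eq_tsum_nat_add (fun b => qRecip q b * qTerm q (m + b)),
    ← sum_range_add_succ_eq_sum_Icc]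
  exact (ENNReal.add_left_inj hfin).1 hsplit

theorem ENNReal.toReal_tsum_ofReal {α : Type*} {f : α → ℝ} (hf : ∀ a, 0 ≤ f a) :
    (∑' a, ENNReal.ofReal (f a)).toReal = ∑' a, f a := by
  rw [ENNReal.tsum_toReal_eq fun _ => ENNReal.ofReal_ne_top]
  exact tsum_congr fun a => ENNReal.toReal_ofReal (hf a)

theorem toReal_strictAntiSum_qTerm_qRecip (hq0 : 0 ≤ q) (hq1 : q < 1) (m n k : ℕ) :
    (strictAntiSum (qTerm q) (qRecip q) m n k).toReal =
      ∑' b : {b : Fin (n + 1) → ℕ // StrictAnti b ∧ ∀ j, k < b j},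
        q ^ (m + b.1 0) / qnum q (m + b.1 0) * ∏ j, 1 / qnum q (b.1 j) := by
  have hr : ∀ a, 0 ≤ 1 / qnum q a := fun a => one_div_nonneg.2 (qnum_nonneg hq0 hq1 a)
  simp only [strictAntiSum, qTerm, qRecip, ← ENNReal.ofReal_prod_of_nonneg fun j _ => hr _,
    ← ENNReal.ofReal_mul (pow_div_qnum_nonneg hq0 hq1 _)]
  exact ENNReal.toReal_tsum_ofReal fun b =>
    mul_nonneg (pow_div_qnum_nonneg hq0 hq1 _) (prod_nonneg fun j _ => hr _)

theorem toReal_antitoneSum_qTerm (hq0 : 0 ≤ q) (hq1 : q < 1) (m n k : ℕ) :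
    (antitoneSum (qTerm q) m n k).toReal =
      ∑' c : {c : Fin (n + 1) → ℕ // Antitone c ∧ ∀ j, c j ∈ Set.Icc 1 m},
        q ^ (c.1 (Fin.last n) + k) / qnum q (c.1 (Fin.last n) + k) *
          ∏ j ∈ univ.erase (Fin.last n), q ^ c.1 j / qnum q (c.1 j) := by
  have hu := pow_div_qnum_nonneg hq0 hq1
  simp only [antitoneSum, qTerm, ← ENNReal.ofReal_prod_of_nonneg fun j _ => hu _,
    ← ENNReal.ofReal_mul (hu _)]
  exact ENNReal.toReal_tsum_ofReal fun c => mul_nonneg (hu _) (prod_nonneg fun j _ => hu _)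

end QTerms

/-- Closed form for the tail sums `A(m,n,k)`: the sum over strictly decreasing
`n`-tuples `b₁ > ⋯ > bₙ > k` of `(q^{m+b₁}/[m+b₁]) ∏ⱼ 1/[bⱼ]` equals
`(q^m/[m])` times a sum over weakly decreasing tuples `m ≥ c₁ ≥ ⋯ ≥ cₙ ≥ 1`. -/
theorem q_tail_sum_general (q : ℝ) (hq0 : 0 < q) (hq1 : q < 1)
    (m n k : ℕ) (hm : 1 ≤ m) (hn : 1 ≤ n) :
    (∑' b : {b : Fin n → ℕ // (∀ i j : Fin n, i < j → b j < b i) ∧ ∀ j, k < b j},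
        (q ^ (m + b.1 ⟨0, hn⟩) / qnum q (m + b.1 ⟨0, hn⟩)) *
          ∏ j : Fin n, 1 / qnum q (b.1 j))
      = (q ^ m / qnum q m) *
          ∑' c : {c : Fin n → ℕ // (∀ i j : Fin n, i ≤ j → c j ≤ c i) ∧
              ∀ j, 1 ≤ c j ∧ c j ≤ m},
            (q ^ (c.1 ⟨n - 1, Nat.sub_lt hn Nat.one_pos⟩ + k) /
                qnum q (c.1 ⟨n - 1, Nat.sub_lt hn Nat.one_pos⟩ + k)) *
              ∏ j ∈ Finset.univ.erase (⟨n - 1, Nat.sub_lt hn Nat.one_pos⟩ : Fin n),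
                q ^ (c.1 j) / qnum q (c.1 j) := by
  obtain ⟨N, rfl⟩ : ∃ N, n = N + 1 := ⟨n - 1, by omega⟩
  calc _ = (strictAntiSum (qTerm q) (qRecip q) m N k).toReal :=
        (toReal_strictAntiSum_qTerm_qRecip hq0.le hq1 m N k).symm
    _ = (qTerm q m * antitoneSum (qTerm q) m N k).toReal := by
        rw [strictAntiSum_eq_mul_antitoneSum
          (fun _ hm => tsum_qRecip_mul_qTerm hq0.le hq1 hm) hm]
    _ = _ := by
        rw [ENNReal.toReal_mul, toReal_antitoneSum_qTerm hq0.le hq1, qTerm,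
          ENNReal.toReal_ofReal (pow_div_qnum_nonneg hq0.le hq1 m)]
        rfl
end

section
/- Let 0<q<1 and let m be a positive integer. Define A(m,0) := q^m/[m]_q and, for n ≥ 1, A(m,n) := Σ_{k_1>k_2>...>k_n>0} (q^{m+k_1}/[m+k_1]_q) ∏_{j=1}^n 1/[k_j]_q, summed over n-tuples of positive integers k_1 > ... > k_n > 0. Then for every complex x with |x| < 1, the series A_m(x) := Σ_{n=0}^∞ x^n A(m,n) converges and equals (q^m/[m]_q) ∏_{c=1}^m (1 − x q^c/[c]_q)^{-1}. -/
/-- `A(m,n)`: for `n = 0` it is `q^m/[m]`; for `n ≥ 1` it is the sum over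
strictly decreasing tuples `k₁ > ⋯ > kₙ > 0` of `(q^{m+k₁}/[m+k₁]) ∏ⱼ 1/[kⱼ]`. -/
noncomputable def Aq (q : ℝ) (m n : ℕ) : ℝ :=
  if hn : n = 0 then q ^ m / qnum q m
  else
    ∑' k : {k : Fin n → ℕ // (∀ i j : Fin n, i < j → k j < k i) ∧ ∀ j, 0 < k j},
      (q ^ (m + k.1 ⟨0, Nat.pos_of_ne_zero hn⟩) / qnum q (m + k.1 ⟨0, Nat.pos_of_ne_zero hn⟩)) *
        ∏ j : Fin n, 1 / qnum q (k.1 j)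

/-!
Write `a k = qterm q k = q^k / [k]_q`. Since `[m + j] = [m] + q^m [j]`, one has
`a (m + j) / [j] = a m * (a j - a (j + m))`, so summing over the first index `k₁`, which ranges
over `k₁ > S` for `S` the next entry, telescopes to `a m * ∑_{r=1}^m a (r + S)`. Hence
`A(m, n+1) = a m * ∑_{r=1}^m A(r, n)`. This gives `A(m, n) ≤ q^(n+1) * C(n+m-1, n)`, so the
series converge, and the generating functions satisfy `G m = a m * (1 + x ∑_{r=1}^m G r)`,
which forces `1 + x ∑_{r=1}^m G r = ∏_{c=1}^m (1 - x a c)⁻¹`.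
-/

theorem sum_Icc_one_eq_sum_range {M : Type*} [AddCommMonoid M] (f : ℕ → M) (m : ℕ) :
    ∑ r ∈ Finset.Icc 1 m, f r = ∑ i ∈ Finset.range m, f (i + 1) := by
  rw [Finset.range_eq_Ico, Finset.sum_Ico_add', zero_add, Finset.Ico_add_one_right_eq_Icc]

theorem hasSum_sub_nat_add {G : Type*} [AddCommGroup G] [TopologicalSpace G]
    [IsTopologicalAddGroup G] {v : ℕ → G} (hv : Summable v)
    (m : ℕ) : HasSum (fun t => v t - v (t + m)) (∑ i ∈ Finset.range m, v i) := by
  simpa using hv.hasSum.sub ((hasSum_nat_add_iff' m).2 hv.hasSum)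

theorem HasSum.prod_of_nonneg {β γ : Type*} {f : β × γ → ℝ} (hf : 0 ≤ f) {g : β → ℝ} {s : ℝ}
    (hfib : ∀ b, HasSum (fun c => f (b, c)) (g b)) (hg : HasSum g s) : HasSum f s := by
  have hsum : Summable f := (summable_prod_of_nonneg hf).2
    ⟨fun b => (hfib b).summable, hg.summable.congr fun b => ((hfib b).tsum_eq).symm⟩
  rw [← (hsum.hasSum.prod_fiberwise hfib).unique hg]
  exact hsum.hasSum

theorem one_add_mul_sum_eq_prod_inv {K : Type*} [Field K] {a G : ℕ → K} {x : K}
    (hG : ∀ m, 0 < m → G m = a m * (1 + x * ∑ r ∈ Finset.Icc 1 m, G r))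
    (ha : ∀ c, 0 < c → 1 - x * a c ≠ 0) (m : ℕ) :
    1 + x * ∑ r ∈ Finset.Icc 1 m, G r = ∏ c ∈ Finset.Icc 1 m, (1 - x * a c)⁻¹ := by
  induction m with
  | zero => simp
  | succ m ih =>
    rw [Finset.prod_Icc_succ_top (by omega), ← ih, eq_mul_inv_iff_mul_eq₀ (ha _ m.succ_pos)]
    have := hG (m + 1) m.succ_pos
    rw [Finset.sum_Icc_succ_top (by omega)] at this ⊢
    linear_combination x * this

noncomputable def qterm (q : ℝ) (k : ℕ) : ℝ := q ^ k / qnum q k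

section QArith

variable {q : ℝ} (hq0 : 0 ≤ q) (hq1 : q < 1)
include hq0 hq1

theorem qnum_nonneg_s6 (k : ℕ) : 0 ≤ qnum q k :=
  div_nonneg (sub_nonneg.2 (pow_le_one₀ hq0 hq1.le)) (sub_nonneg.2 hq1.le)

theorem one_le_qnum {k : ℕ} (hk : 0 < k) : 1 ≤ qnum q k := by
  have : q ^ k ≤ q := pow_le_of_le_one hq0 hq1.le hk.ne'
  rw [qnum, le_div_iff₀ (by linarith)]
  linarith

theorem qterm_nonneg (k : ℕ) : 0 ≤ qterm q k :=
  div_nonneg (pow_nonneg hq0 k) (qnum_nonneg_s6 hq0 hq1 k)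

theorem qterm_le_pow (k : ℕ) : qterm q k ≤ q ^ k := by
  rcases k.eq_zero_or_pos with rfl | hk
  · simp [qterm, qnum]
  · exact div_le_self (pow_nonneg hq0 k) (one_le_qnum hq0 hq1 hk)

theorem qterm_le_self {k : ℕ} (hk : 0 < k) : qterm q k ≤ q :=
  (qterm_le_pow hq0 hq1 k).trans (pow_le_of_le_one hq0 hq1.le hk.ne')

theorem qterm_add_div_qnum {m j : ℕ} (hm : 0 < m) (hj : 0 < j) :
    qterm q (m + j) / qnum q j = qterm q m * (qterm q j - qterm q (j + m)) := by
  have hne : ∀ k, 0 < k → 1 - q ^ k ≠ 0 := fun k hk =>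
    (sub_pos.2 (pow_lt_one₀ hq0 hq1 hk.ne')).ne'
  have := hne m hm; have := hne j hj; have := hne (m + j) (by omega)
  have : 1 - q ≠ 0 := (sub_pos.2 hq1).ne'
  rw [add_comm j m]
  simp only [qterm, qnum]
  field_simp
  ring

theorem summable_qterm_add (S : ℕ) : Summable fun t => qterm q (t + S) :=
  Summable.of_nonneg_of_le (fun t => qterm_nonneg hq0 hq1 _)
    (fun t => (qterm_le_pow hq0 hq1 _).trans (pow_le_pow_of_le_one hq0 hq1.le (by omega)))
    (summable_geometric_of_lt_one hq0 hq1)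

theorem hasSum_qterm_div_qnum {m : ℕ} (hm : 0 < m) (S : ℕ) :
    HasSum (fun t => qterm q (m + (t + (S + 1))) / qnum q (t + (S + 1)))
      (qterm q m * ∑ r ∈ Finset.Icc 1 m, qterm q (r + S)) := by
  have h := (hasSum_sub_nat_add (summable_qterm_add hq0 hq1 (S + 1)) m).mul_left (qterm q m)
  have hterm : ∀ t, qterm q (m + (t + (S + 1))) / qnum q (t + (S + 1))
      = qterm q m * (qterm q (t + (S + 1)) - qterm q (t + m + (S + 1))) := fun t => by
    rw [qterm_add_div_qnum hq0 hq1 hm (by omega), show t + (S + 1) + m = t + m + (S + 1) by omega]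
  rw [funext hterm, sum_Icc_one_eq_sum_range]
  simpa only [add_assoc, add_comm 1 S] using h

end QArith

def DecTuple (n : ℕ) : Type := {k : Fin n → ℕ // StrictAnti k ∧ ∀ j, 0 < k j}

namespace DecTuple

variable {n : ℕ}

def top (k : DecTuple n) : ℕ := Finset.univ.sup k.1

theorem le_top (k : DecTuple n) (j : Fin n) : k.1 j ≤ k.top :=
  Finset.le_sup (Finset.mem_univ j)

theorem top_eq_head (k : DecTuple (n + 1)) : k.top = k.1 0 :=
  le_antisymm (Finset.sup_le fun j _ => k.2.1.antitone (Fin.zero_le j)) (k.le_top 0)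

def cons (k : DecTuple n) (t : ℕ) : DecTuple (n + 1) :=
  ⟨Fin.cons (t + (k.top + 1)) k.1,
    -- `StrictAnti` into `ℕ` is `StrictMono` into `ℕᵒᵈ`
    (Fin.strictMono_cons (α := ℕᵒᵈ)).2
      ⟨fun j => show k.1 j < t + (k.top + 1) by have := k.le_top j; omega, k.2.1⟩,
    Fin.cases (show 0 < t + (k.top + 1) by omega) k.2.2⟩

def tail (k : DecTuple (n + 1)) : DecTuple n :=
  ⟨Fin.tail k.1, k.2.1.comp_strictMono (Fin.strictMono_succ), fun j => k.2.2 j.succ⟩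

theorem top_cons (k : DecTuple n) (t : ℕ) : (k.cons t).top = t + (k.top + 1) := by
  rw [top_eq_head]; rfl

theorem tail_cons (k : DecTuple n) (t : ℕ) : (k.cons t).tail = k :=
  Subtype.ext (Fin.tail_cons (α := fun _ => ℕ) (t + (k.top + 1)) k.1)

theorem tail_top_lt_head (k : DecTuple (n + 1)) : k.tail.top < k.1 0 :=
  (Finset.sup_lt_iff (k.2.2 0)).2 fun j _ => k.2.1 j.succ_pos

theorem cons_tail (k : DecTuple (n + 1)) : k.tail.cons (k.1 0 - (k.tail.top + 1)) = k := by
  have := k.tail_top_lt_head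
  refine Subtype.ext ?_
  change Fin.cons _ (Fin.tail k.1) = k.1
  rw [show k.1 0 - (k.tail.top + 1) + (k.tail.top + 1) = k.1 0 by omega, Fin.cons_self_tail]

def consEquiv (n : ℕ) : DecTuple n × ℕ ≃ DecTuple (n + 1) where
  toFun p := p.1.cons p.2
  invFun k := (k.tail, k.1 0 - (k.tail.top + 1))
  left_inv := by
    rintro ⟨k, t⟩
    refine Prod.ext (tail_cons k t) ?_
    change t + (k.top + 1) - ((k.cons t).tail.top + 1) = t
    rw [tail_cons]
    omega
  right_inv := cons_tail

instance : Unique (DecTuple 0) where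
  default := ⟨finZeroElim, fun i => i.elim0, fun j => j.elim0⟩
  uniq _ := Subtype.ext (Subsingleton.elim _ _)

end DecTuple

theorem Aq_zero (q : ℝ) (m : ℕ) : Aq q m 0 = qterm q m := rfl

/-- `top` is the largest entry (the first one, or `0` for the empty tuple), so for every `n`,
including `n = 0`, this is the summand of `Aq q m n`. -/
noncomputable def tupleWeight (q : ℝ) (m : ℕ) {n : ℕ} (k : DecTuple n) : ℝ :=
  qterm q (m + k.top) * ∏ j, 1 / qnum q (k.1 j)

theorem hasSum_tupleWeight_zero (q : ℝ) (m : ℕ) :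
    HasSum (tupleWeight q m : DecTuple 0 → ℝ) (Aq q m 0) := by
  convert hasSum_unique (tupleWeight q m : DecTuple 0 → ℝ)
  simp [tupleWeight, DecTuple.top, Aq_zero]

theorem tsum_tupleWeight_succ (q : ℝ) (m n : ℕ) :
    ∑' k : DecTuple (n + 1), tupleWeight q m k = Aq q m (n + 1) := by
  rw [Aq, dif_neg n.succ_ne_zero]
  exact tsum_congr fun k => by rw [tupleWeight, DecTuple.top_eq_head]; rfl

theorem tupleWeight_cons (q : ℝ) (m : ℕ) {n : ℕ} (k : DecTuple n) (t : ℕ) :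
    tupleWeight q m (k.cons t)
      = qterm q (m + (t + (k.top + 1))) / qnum q (t + (k.top + 1)) * ∏ j, 1 / qnum q (k.1 j) := by
  rw [tupleWeight, DecTuple.top_cons, Fin.prod_univ_succ]
  simp only [DecTuple.cons, Fin.cons_zero, Fin.cons_succ]
  ring

section Weights

variable {q : ℝ} (hq0 : 0 ≤ q) (hq1 : q < 1)
include hq0 hq1

theorem tupleWeight_nonneg (m : ℕ) {n : ℕ} (k : DecTuple n) : 0 ≤ tupleWeight q m k :=
  mul_nonneg (qterm_nonneg hq0 hq1 _)
    (Finset.prod_nonneg fun _ _ => one_div_nonneg.2 (qnum_nonneg_s6 hq0 hq1 _))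

theorem hasSum_tupleWeight_succ {m n : ℕ} (hm : 0 < m) {s : ℕ → ℝ}
    (hs : ∀ r ∈ Finset.Icc 1 m, HasSum (tupleWeight q r : DecTuple n → ℝ) (s r)) :
    HasSum (tupleWeight q m : DecTuple (n + 1) → ℝ) (qterm q m * ∑ r ∈ Finset.Icc 1 m, s r) := by
  rw [← (DecTuple.consEquiv n).hasSum_iff]
  refine HasSum.prod_of_nonneg (fun p => tupleWeight_nonneg hq0 hq1 m _)
    (g := fun k => qterm q m * ∑ r ∈ Finset.Icc 1 m, tupleWeight q r k) (fun k => ?_)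
    ((hasSum_sum hs).mul_left _)
  have h := (hasSum_qterm_div_qnum hq0 hq1 hm k.top).mul_right (∏ j, 1 / qnum q (k.1 j))
  simp only [DecTuple.consEquiv, Equiv.coe_fn_mk, tupleWeight_cons]
  rw [mul_assoc, Finset.sum_mul] at h
  exact h

theorem hasSum_tupleWeight (n : ℕ) {m : ℕ} (hm : 0 < m) :
    HasSum (tupleWeight q m : DecTuple n → ℝ) (Aq q m n) := by
  induction n generalizing m with
  | zero => exact hasSum_tupleWeight_zero q m
  | succ n ih =>
    have h := hasSum_tupleWeight_succ hq0 hq1 hm fun _ hr => ih (Finset.mem_Icc.1 hr).1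
    rw [← tsum_tupleWeight_succ, h.tsum_eq]
    exact h

theorem Aq_succ (n : ℕ) {m : ℕ} (hm : 0 < m) :
    Aq q m (n + 1) = qterm q m * ∑ r ∈ Finset.Icc 1 m, Aq q r n :=
  (hasSum_tupleWeight hq0 hq1 (n + 1) hm).unique
    (hasSum_tupleWeight_succ hq0 hq1 hm fun _ hr =>
      hasSum_tupleWeight hq0 hq1 n (Finset.mem_Icc.1 hr).1)

theorem Aq_nonneg (n : ℕ) {m : ℕ} (hm : 0 < m) : 0 ≤ Aq q m n :=
  (hasSum_tupleWeight hq0 hq1 n hm).nonneg fun k => tupleWeight_nonneg hq0 hq1 m k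

end Weights

theorem Aq_le_pow_mul_choose {q : ℝ} (hq0 : 0 ≤ q) (hq1 : q < 1) (n k : ℕ) :
    Aq q (k + 1) n ≤ q ^ (n + 1) * (n + k).choose n := by
  induction n generalizing k with
  | zero => simpa [Aq_zero] using qterm_le_self hq0 hq1 k.succ_pos
  | succ n ih =>
    have hockey :
        ∑ i ∈ Finset.range (k + 1), ((n + i).choose n : ℝ) = (n + 1 + k).choose (n + 1) := by
      rw_mod_cast [show n + 1 + k = k + n + 1 by omega, ← Nat.sum_range_add_choose]
      exact Finset.sum_congr rfl fun i _ => by rw [add_comm]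
    calc Aq q (k + 1) (n + 1) = qterm q (k + 1) * ∑ i ∈ Finset.range (k + 1), Aq q (i + 1) n := by
          rw [Aq_succ hq0 hq1 n k.succ_pos, sum_Icc_one_eq_sum_range]
      _ ≤ q * ∑ i ∈ Finset.range (k + 1), q ^ (n + 1) * (n + i).choose n :=
          mul_le_mul (qterm_le_self hq0 hq1 k.succ_pos) (Finset.sum_le_sum fun i _ => ih i)
            (Finset.sum_nonneg fun i _ => Aq_nonneg hq0 hq1 n i.succ_pos) hq0
      _ = q ^ (n + 1 + 1) * (n + 1 + k).choose (n + 1) := by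
          rw [← Finset.mul_sum, hockey, pow_succ]
          ring

theorem summable_Aq_mul_pow {q : ℝ} (hq0 : 0 ≤ q) (hq1 : q < 1) {m : ℕ} (hm : 0 < m) {x : ℂ}
    (hx : ‖x‖ < 1) : Summable fun n => x ^ n * (Aq q m n : ℂ) := by
  obtain ⟨k, rfl⟩ : ∃ k, m = k + 1 := ⟨m - 1, by omega⟩
  have hr : ‖‖x‖ * q‖ < 1 := by
    rw [Real.norm_of_nonneg (by positivity)]
    exact mul_lt_one_of_nonneg_of_lt_one_left (norm_nonneg x) hx hq1.le
  refine Summable.of_norm_bounded ((summable_choose_mul_geometric_of_norm_lt_one k hr).mul_left q)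
    fun n => ?_
  calc ‖x ^ n * (Aq q (k + 1) n : ℂ)‖ = ‖x‖ ^ n * Aq q (k + 1) n := by
        rw [norm_mul, norm_pow, Complex.norm_real,
          Real.norm_of_nonneg (Aq_nonneg hq0 hq1 n k.succ_pos)]
    _ ≤ ‖x‖ ^ n * (q ^ (n + 1) * (n + k).choose n) := by
        gcongr
        exact Aq_le_pow_mul_choose hq0 hq1 n k
    _ = q * ((n + k).choose k * (‖x‖ * q) ^ n) := by
        rw [Nat.choose_symm_add]
        ring

theorem tsum_Aq_mul_pow_eq {q : ℝ} (hq0 : 0 ≤ q) (hq1 : q < 1) {m : ℕ} (hm : 0 < m) {x : ℂ}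
    (hx : ‖x‖ < 1) :
    ∑' n, x ^ n * (Aq q m n : ℂ)
      = qterm q m * (1 + x * ∑ r ∈ Finset.Icc 1 m, ∑' n, x ^ n * (Aq q r n : ℂ)) := by
  have hsum : ∀ r ∈ Finset.Icc 1 m, Summable fun n => x ^ n * (Aq q r n : ℂ) :=
    fun r hr => summable_Aq_mul_pow hq0 hq1 (Finset.mem_Icc.1 hr).1 hx
  have hsucc : ∀ n, x ^ (n + 1) * (Aq q m (n + 1) : ℂ)
      = qterm q m * x * ∑ r ∈ Finset.Icc 1 m, x ^ n * (Aq q r n : ℂ) := fun n => by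
    rw [Aq_succ hq0 hq1 n hm]
    push_cast
    rw [Finset.mul_sum, Finset.mul_sum, Finset.mul_sum]
    exact Finset.sum_congr rfl fun r _ => by ring
  rw [(summable_Aq_mul_pow hq0 hq1 hm hx).tsum_eq_zero_add, tsum_congr hsucc, tsum_mul_left,
    Summable.tsum_finsetSum hsum, pow_zero, one_mul, Aq_zero]
  ring

theorem one_sub_mul_qterm_ne_zero {q : ℝ} (hq0 : 0 ≤ q) (hq1 : q < 1) {x : ℂ} (hx : ‖x‖ < 1)
    {c : ℕ} (hc : 0 < c) : 1 - x * qterm q c ≠ 0 := by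
  have hlt : ‖x * (qterm q c : ℂ)‖ < 1 := by
    rw [norm_mul, Complex.norm_real, Real.norm_of_nonneg (qterm_nonneg hq0 hq1 c)]
    exact mul_lt_one_of_nonneg_of_lt_one_left (norm_nonneg x) hx
      ((qterm_le_self hq0 hq1 hc).trans hq1.le)
  exact sub_ne_zero.2 fun h => by simp [← h] at hlt

/-- The generating function `A_m(x) = Σ_n x^n A(m,n)` converges for `|x| < 1`
and has the stated product representation. -/
theorem q_A_generating_function (q : ℝ) (hq0 : 0 < q) (hq1 : q < 1)
    (m : ℕ) (hm : 1 ≤ m) (x : ℂ) (hx : ‖x‖ < 1) :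
    Summable (fun n : ℕ => x ^ n * (Aq q m n : ℂ)) ∧
    (∑' n : ℕ, x ^ n * (Aq q m n : ℂ))
      = ((q : ℂ) ^ m / (qnum q m : ℂ)) *
          ∏ c ∈ Finset.Icc 1 m, (1 - x * (q : ℂ) ^ c / (qnum q c : ℂ))⁻¹ := by
  refine ⟨summable_Aq_mul_pow hq0.le hq1 hm hx, ?_⟩
  rw [tsum_Aq_mul_pow_eq hq0.le hq1 hm hx, one_add_mul_sum_eq_prod_inv
    (fun r hr => tsum_Aq_mul_pow_eq hq0.le hq1 hr hx)
    (fun c hc => one_sub_mul_qterm_ne_zero hq0.le hq1 hx hc)]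
  simp only [qterm, Complex.ofReal_div, Complex.ofReal_pow, mul_div_assoc]
end

section
/- Let 0<q<1. Then ζ[2,1] = ζ[3], that is, Σ_{k_1>k_2>0} q^{k_1}/([k_1]_q^2 [k_2]_q) = Σ_{k=1}^∞ q^{2k}/[k]_q^3. -/
/-- The single `q`-zeta value `ζ[n] = Σ_{k≥1} q^{(n-1)k}/[k]_q^n`. -/
noncomputable def qzeta (q : ℝ) (n : ℕ) : ℝ :=
  ∑' k : ℕ, q ^ ((n - 1) * (k + 1)) / (qnum q (k + 1)) ^ n

/-- The double `q`-zeta value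
`ζ[a,b] = Σ_{k₁>k₂>0} (q^{(a-1)k₁}/[k₁]_q^a)(q^{(b-1)k₂}/[k₂]_q^b)`. -/
noncomputable def qzeta2 (q : ℝ) (a b : ℕ) : ℝ :=
  ∑' p : {p : ℕ × ℕ // p.2 < p.1 ∧ 0 < p.2},
    (q ^ ((a - 1) * p.1.1) / (qnum q p.1.1) ^ a) *
      (q ^ ((b - 1) * p.1.2) / (qnum q p.1.2) ^ b)

namespace QzetaAux

/-- `F (m-1, n-1) = q^(m+n)/([m][n][m+n])`. -/
noncomputable def Ff (q : ℝ) (p : ℕ × ℕ) : ℝ :=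
  q ^ (p.1 + p.2 + 2) / (qnum q (p.1 + 1) * qnum q (p.2 + 1) * qnum q (p.1 + p.2 + 2))

noncomputable def G1 (q : ℝ) (p : ℕ × ℕ) : ℝ :=
  q ^ (p.1 + p.2 + 2) / (qnum q (p.1 + p.2 + 2) ^ 2 * qnum q (p.2 + 1))

noncomputable def G2 (q : ℝ) (p : ℕ × ℕ) : ℝ :=
  q ^ (p.1 + p.2 + 2) * q ^ (p.1 + 1) / (qnum q (p.1 + p.2 + 2) ^ 2 * qnum q (p.1 + 1))

noncomputable def Hf (q : ℝ) (p : ℕ × ℕ) : ℝ :=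
  q ^ (p.1 + p.2 + 2) / (qnum q (p.1 + 1) * qnum q (p.2 + 1) ^ 2)

noncomputable def Tt (q : ℝ) (p : ℕ × ℕ) : ℝ :=
  q ^ (p.1 + p.2 + 2) * q ^ (p.2 + 1) / (qnum q (p.2 + 1) ^ 2 * qnum q (p.1 + p.2 + 2))

variable {q : ℝ}

lemma one_le_qnum (hq0 : 0 < q) (hq1 : q < 1) (k : ℕ) : 1 ≤ qnum q (k + 1) := by
  unfold qnum
  rw [le_div_iff₀ (by linarith)]
  have h1 : q ^ (k + 1) ≤ q ^ 1 := pow_le_pow_of_le_one hq0.le hq1.le (by omega)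
  simpa using by linarith [h1]

lemma qnum_pos (hq0 : 0 < q) (hq1 : q < 1) (k : ℕ) : 0 < qnum q (k + 1) :=
  lt_of_lt_of_le one_pos (one_le_qnum hq0 hq1 k)

lemma qnum_add (hq1 : q < 1) (m n : ℕ) :
    qnum q (m + n) = qnum q m + q ^ m * qnum q n := by
  unfold qnum
  have h : (1 : ℝ) - q ≠ 0 := by linarith
  field_simp
  ring

lemma summable_master (hq0 : 0 < q) (hq1 : q < 1) :
    Summable (fun p : ℕ × ℕ => q ^ (p.1 + p.2 + 2)) := by
  have hg : Summable (fun a : ℕ => q ^ (a + 1)) := by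
    simpa [pow_succ, mul_comm] using (summable_geometric_of_lt_one hq0.le hq1).mul_left q
  have := hg.mul_of_nonneg hg (fun a => by positivity) (fun a => by positivity)
  refine this.congr fun p => ?_
  rw [← pow_add]
  congr 1
  omega

lemma summable_aux (hq0 : 0 < q) (hq1 : q < 1) (f : ℕ × ℕ → ℝ)
    (h0 : ∀ p, 0 ≤ f p) (h1 : ∀ p, f p ≤ q ^ (p.1 + p.2 + 2)) : Summable f :=
  Summable.of_nonneg_of_le h0 h1 (summable_master hq0 hq1)

lemma one_le_mul' {a b : ℝ} (ha : 1 ≤ a) (hb : 1 ≤ b) : 1 ≤ a * b := by nlinarith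

lemma bound_helper (hq0 : 0 < q) (hq1 : q < 1) (e e' : ℕ) {D : ℝ} (hD : 1 ≤ D) :
    q ^ e * q ^ e' / D ≤ q ^ e := by
  have h1 : q ^ e * q ^ e' / D ≤ q ^ e * q ^ e' :=
    div_le_self (by positivity) hD
  have h2 : q ^ e * q ^ e' ≤ q ^ e * 1 := by
    have : q ^ e' ≤ 1 := pow_le_one₀ hq0.le hq1.le
    nlinarith [pow_nonneg hq0.le e]
  nlinarith

lemma summable_Ff (hq0 : 0 < q) (hq1 : q < 1) : Summable (Ff q) := by
  refine summable_aux hq0 hq1 _ (fun p => by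
    unfold Ff
    have := qnum_pos hq0 hq1 p.1
    have := qnum_pos hq0 hq1 p.2
    have : 0 < qnum q (p.1 + p.2 + 2) := by
      have := qnum_pos hq0 hq1 (p.1 + p.2 + 1); simpa [Nat.add_assoc] using this
    positivity) (fun p => ?_)
  unfold Ff
  have h1 := one_le_qnum hq0 hq1 p.1
  have h2 := one_le_qnum hq0 hq1 p.2
  have h3 : 1 ≤ qnum q (p.1 + p.2 + 2) := by
    have := one_le_qnum hq0 hq1 (p.1 + p.2 + 1); simpa [Nat.add_assoc] using this
  have hD : 1 ≤ qnum q (p.1 + 1) * qnum q (p.2 + 1) * qnum q (p.1 + p.2 + 2) :=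
    one_le_mul' (one_le_mul' h1 h2) h3
  simpa using bound_helper hq0 hq1 (p.1 + p.2 + 2) 0 hD

lemma summable_G1 (hq0 : 0 < q) (hq1 : q < 1) : Summable (G1 q) := by
  refine summable_aux hq0 hq1 _ (fun p => by
    unfold G1
    have h2 := qnum_pos hq0 hq1 p.2
    have h3 : 0 < qnum q (p.1 + p.2 + 2) := by
      have := qnum_pos hq0 hq1 (p.1 + p.2 + 1); simpa [Nat.add_assoc] using this
    positivity) (fun p => ?_)
  unfold G1
  have h2 := one_le_qnum hq0 hq1 p.2
  have h3 : 1 ≤ qnum q (p.1 + p.2 + 2) := by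
    have := one_le_qnum hq0 hq1 (p.1 + p.2 + 1); simpa [Nat.add_assoc] using this
  have hD : 1 ≤ qnum q (p.1 + p.2 + 2) ^ 2 * qnum q (p.2 + 1) :=
    one_le_mul' (by nlinarith) h2
  simpa using bound_helper hq0 hq1 (p.1 + p.2 + 2) 0 hD

lemma summable_G2 (hq0 : 0 < q) (hq1 : q < 1) : Summable (G2 q) := by
  refine summable_aux hq0 hq1 _ (fun p => by
    unfold G2
    have h2 := qnum_pos hq0 hq1 p.1
    have h3 : 0 < qnum q (p.1 + p.2 + 2) := by
      have := qnum_pos hq0 hq1 (p.1 + p.2 + 1); simpa [Nat.add_assoc] using this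
    positivity) (fun p => ?_)
  unfold G2
  have h2 := one_le_qnum hq0 hq1 p.1
  have h3 : 1 ≤ qnum q (p.1 + p.2 + 2) := by
    have := one_le_qnum hq0 hq1 (p.1 + p.2 + 1); simpa [Nat.add_assoc] using this
  have hD : 1 ≤ qnum q (p.1 + p.2 + 2) ^ 2 * qnum q (p.1 + 1) :=
    one_le_mul' (by nlinarith) h2
  exact bound_helper hq0 hq1 (p.1 + p.2 + 2) (p.1 + 1) hD

lemma summable_Hf (hq0 : 0 < q) (hq1 : q < 1) : Summable (Hf q) := by
  refine summable_aux hq0 hq1 _ (fun p => by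
    unfold Hf
    have h1 := qnum_pos hq0 hq1 p.1
    have h2 := qnum_pos hq0 hq1 p.2
    positivity) (fun p => ?_)
  unfold Hf
  have h1 := one_le_qnum hq0 hq1 p.1
  have h2 := one_le_qnum hq0 hq1 p.2
  have hD : 1 ≤ qnum q (p.1 + 1) * qnum q (p.2 + 1) ^ 2 :=
    one_le_mul' h1 (by nlinarith)
  simpa using bound_helper hq0 hq1 (p.1 + p.2 + 2) 0 hD

lemma summable_Tt (hq0 : 0 < q) (hq1 : q < 1) : Summable (Tt q) := by
  refine summable_aux hq0 hq1 _ (fun p => by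
    unfold Tt
    have h2 := qnum_pos hq0 hq1 p.2
    have h3 : 0 < qnum q (p.1 + p.2 + 2) := by
      have := qnum_pos hq0 hq1 (p.1 + p.2 + 1); simpa [Nat.add_assoc] using this
    positivity) (fun p => ?_)
  unfold Tt
  have h2 := one_le_qnum hq0 hq1 p.2
  have h3 : 1 ≤ qnum q (p.1 + p.2 + 2) := by
    have := one_le_qnum hq0 hq1 (p.1 + p.2 + 1); simpa [Nat.add_assoc] using this
  have hD : 1 ≤ qnum q (p.2 + 1) ^ 2 * qnum q (p.1 + p.2 + 2) :=
    one_le_mul' (by nlinarith) h3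
  exact bound_helper hq0 hq1 (p.1 + p.2 + 2) (p.2 + 1) hD

/-- Pointwise identity (I): `F = G1 + G2`. -/
lemma F_eq_G1_add_G2 (hq0 : 0 < q) (hq1 : q < 1) (p : ℕ × ℕ) :
    Ff q p = G1 q p + G2 q p := by
  obtain ⟨a, b⟩ := p
  have hC : qnum q (a + b + 2) = qnum q (a + 1) + q ^ (a + 1) * qnum q (b + 1) := by
    have h := qnum_add (q := q) hq1 (a + 1) (b + 1)
    have : a + 1 + (b + 1) = a + b + 2 := by omega
    rwa [this] at h
  have hA := qnum_pos hq0 hq1 a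
  have hB := qnum_pos hq0 hq1 b
  have hC' : 0 < qnum q (a + b + 2) := by
    have := qnum_pos hq0 hq1 (a + b + 1); simpa [Nat.add_assoc] using this
  unfold Ff G1 G2
  simp only
  rw [hC] at *
  field_simp

/-- Pointwise identity (II): `F = H - T`. -/
lemma F_eq_H_sub_T (hq0 : 0 < q) (hq1 : q < 1) (p : ℕ × ℕ) :
    Ff q p = Hf q p - Tt q p := by
  obtain ⟨a, b⟩ := p
  have hC : qnum q (a + b + 2) = qnum q (b + 1) + q ^ (b + 1) * qnum q (a + 1) := by
    have h := qnum_add (q := q) hq1 (b + 1) (a + 1)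
    have : b + 1 + (a + 1) = a + b + 2 := by omega
    rwa [this] at h
  have hA := qnum_pos hq0 hq1 a
  have hB := qnum_pos hq0 hq1 b
  unfold Ff Hf Tt
  simp only
  rw [hC] at *
  have hC' : (0:ℝ) < qnum q (b + 1) + q ^ (b + 1) * qnum q (a + 1) := by positivity
  field_simp
  ring

end QzetaAux

open QzetaAux in
/-- ζ[2,1] = ζ[3]. -/
theorem qzeta_two_one (q : ℝ) (hq0 : 0 < q) (hq1 : q < 1) :
    qzeta2 q 2 1 = qzeta q 3 := by
  classical
  -- abbreviations
  set S1 := ∑' p : ℕ × ℕ, G1 q p with hS1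
  set S2 := ∑' p : ℕ × ℕ, G2 q p with hS2
  set T := ∑' p : ℕ × ℕ, Tt q p with hT
  set P := ∑' p : ℕ × ℕ, Hf q p with hP
  have hsG1 := summable_G1 hq0 hq1
  have hsG2 := summable_G2 hq0 hq1
  have hsH := summable_Hf hq0 hq1
  have hsT := summable_Tt hq0 hq1
  -- step 1 : ∑ F = S1 + S2
  have e1 : ∑' p : ℕ × ℕ, Ff q p = S1 + S2 := by
    rw [tsum_congr (F_eq_G1_add_G2 hq0 hq1)]
    exact Summable.tsum_add hsG1 hsG2
  -- step 2 : ∑ F = P - T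
  have e2 : ∑' p : ℕ × ℕ, Ff q p = P - T := by
    rw [tsum_congr (F_eq_H_sub_T hq0 hq1)]
    exact Summable.tsum_sub hsH hsT
  -- step 3 : P = T + S2 + ζ[3]
  -- split Hf by trichotomy on the two coordinates
  have hsplit : ∀ p : ℕ × ℕ, Hf q p =
      (if p.2 < p.1 then Hf q p else 0) + (if p.1 < p.2 then Hf q p else 0) +
        (if p.1 = p.2 then Hf q p else 0) := by
    intro p
    rcases lt_trichotomy p.1 p.2 with h | h | h
    · simp [h, lt_asymm h, ne_of_lt h, h.ne]
    · simp [h, lt_irrefl]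
    · simp [h, lt_asymm h, (ne_of_lt h).symm, h.ne']
  have hHnonneg : ∀ p : ℕ × ℕ, 0 ≤ Hf q p := fun p => by
    unfold Hf
    have h1 := qnum_pos hq0 hq1 p.1
    have h2 := qnum_pos hq0 hq1 p.2
    positivity
  have hs1 : Summable fun p : ℕ × ℕ => if p.2 < p.1 then Hf q p else 0 := by
    refine hsH.of_nonneg_of_le (fun p => by split <;> [exact hHnonneg p; rfl])
      (fun p => by split <;> [rfl; exact hHnonneg p])
  have hs2 : Summable fun p : ℕ × ℕ => if p.1 < p.2 then Hf q p else 0 := by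
    refine hsH.of_nonneg_of_le (fun p => by split <;> [exact hHnonneg p; rfl])
      (fun p => by split <;> [rfl; exact hHnonneg p])
  have hs3 : Summable fun p : ℕ × ℕ => if p.1 = p.2 then Hf q p else 0 := by
    refine hsH.of_nonneg_of_le (fun p => by split <;> [exact hHnonneg p; rfl])
      (fun p => by split <;> [rfl; exact hHnonneg p])
  have e3 : P = (∑' p : ℕ × ℕ, if p.2 < p.1 then Hf q p else 0) +
      (∑' p : ℕ × ℕ, if p.1 < p.2 then Hf q p else 0) +
      (∑' p : ℕ × ℕ, if p.1 = p.2 then Hf q p else 0) := by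
    rw [hP, tsum_congr hsplit, Summable.tsum_add (hs1.add hs2) hs3, Summable.tsum_add hs1 hs2]
  -- identify the three pieces
  have piece1 : (∑' p : ℕ × ℕ, if p.2 < p.1 then Hf q p else 0) = T := by
    have hinj : Function.Injective (fun p : ℕ × ℕ => (p.2 + p.1 + 1, p.2)) := by
      intro x y h
      simp only [Prod.mk.injEq] at h
      obtain ⟨h1, h2⟩ := h
      exact Prod.ext (by omega) (by omega)
    have := hinj.tsum_eq (f := fun p : ℕ × ℕ => if p.2 < p.1 then Hf q p else 0) ?_
    · rw [← this]
      refine tsum_congr fun p => ?_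
      obtain ⟨d, b⟩ := p
      simp only
      split
      case isFalse h => exact absurd (by omega) h
      unfold Hf Tt
      simp only
      rw [show b + d + 1 + 1 = d + b + 2 by omega,
        show b + d + 1 + b + 2 = d + b + 2 + (b + 1) by omega, pow_add]
      ring
    · rintro ⟨k, j⟩ hx
      simp only [Function.mem_support, ne_eq, ite_eq_right_iff, not_forall] at hx
      obtain ⟨hlt, -⟩ := hx
      exact ⟨(k - j - 1, j), by simp only [Prod.mk.injEq, and_true, true_and]; omega⟩
  have piece2 : (∑' p : ℕ × ℕ, if p.1 < p.2 then Hf q p else 0) = S2 := by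
    have hinj : Function.Injective (fun p : ℕ × ℕ => (p.1, p.1 + p.2 + 1)) := by
      intro x y h
      simp only [Prod.mk.injEq] at h
      obtain ⟨h1, h2⟩ := h
      exact Prod.ext (by omega) (by omega)
    have := hinj.tsum_eq (f := fun p : ℕ × ℕ => if p.1 < p.2 then Hf q p else 0) ?_
    · rw [← this]
      refine tsum_congr fun p => ?_
      obtain ⟨a, d⟩ := p
      simp only
      split
      case isFalse h => exact absurd (by omega) h
      unfold Hf G2
      simp only
      rw [show a + d + 1 + 1 = a + d + 2 by omega,
        show a + (a + d + 1) + 2 = a + d + 2 + (a + 1) by omega, pow_add]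
      ring
    · rintro ⟨k, j⟩ hx
      simp only [Function.mem_support, ne_eq, ite_eq_right_iff, not_forall] at hx
      obtain ⟨hlt, -⟩ := hx
      exact ⟨(k, j - k - 1), by simp only [Prod.mk.injEq, and_true, true_and]; omega⟩
  have piece3 : (∑' p : ℕ × ℕ, if p.1 = p.2 then Hf q p else 0) = qzeta q 3 := by
    have hinj : Function.Injective (fun n : ℕ => ((n, n) : ℕ × ℕ)) := by
      intro x y h
      simpa using congrArg Prod.fst h
    have := hinj.tsum_eq (f := fun p : ℕ × ℕ => if p.1 = p.2 then Hf q p else 0) ?_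
    · rw [← this]
      unfold qzeta
      refine tsum_congr fun n => ?_
      simp only
      split
      case isFalse h => exact absurd (by trivial) h
      unfold Hf
      simp only
      rw [show (3:ℕ) - 1 = 2 from rfl, show n + n + 2 = 2 * (n + 1) by omega]
      ring
    · rintro ⟨k, j⟩ hx
      simp only [Function.mem_support, ne_eq, ite_eq_right_iff, not_forall] at hx
      obtain ⟨hkj, -⟩ := hx
      exact ⟨k, by simp only [Prod.mk.injEq, and_true, true_and]; omega⟩
  -- step 4 : S1 = qzeta2 q 2 1
  have e4 : qzeta2 q 2 1 = S1 := by
    have hinj : Function.Injective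
        (fun p : ℕ × ℕ => (⟨(p.1 + p.2 + 2, p.2 + 1), by constructor <;> omega⟩ :
          {p : ℕ × ℕ // p.2 < p.1 ∧ 0 < p.2})) := by
      intro x y h
      have h' : (x.1 + x.2 + 2, x.2 + 1) = (y.1 + y.2 + 2, y.2 + 1) := congrArg Subtype.val h
      simp only [Prod.mk.injEq] at h'
      exact Prod.ext (by omega) (by omega)
    have key := hinj.tsum_eq (f := fun p : {p : ℕ × ℕ // p.2 < p.1 ∧ 0 < p.2} =>
        (q ^ ((2 - 1) * p.1.1) / (qnum q p.1.1) ^ 2) *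
          (q ^ ((1 - 1) * p.1.2) / (qnum q p.1.2) ^ 1)) ?_
    · unfold qzeta2
      rw [← key]
      refine (tsum_congr fun p => ?_).symm
      obtain ⟨a, b⟩ := p
      unfold G1
      simp only [pow_one]
      rw [show (2:ℕ) - 1 = 1 from rfl, show (1:ℕ) - 1 = 0 from rfl]
      simp only [one_mul, Nat.zero_mul, pow_zero]
      have h3 : qnum q (a + b + 2) ≠ 0 := by
        have := qnum_pos hq0 hq1 (a + b + 1)
        have h' : (0:ℝ) < qnum q (a + b + 2) := by simpa [Nat.add_assoc] using this
        exact h'.ne'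
      have h2 : qnum q (b + 1) ≠ 0 := (qnum_pos hq0 hq1 b).ne'
      field_simp
    · rintro ⟨⟨k, j⟩, hk, hj⟩ -
      exact ⟨(k - j - 1, j - 1), Subtype.ext (by simp only [Prod.mk.injEq, and_true, true_and]; omega)⟩
  -- conclude
  have key1 : S1 + S2 = P - T := by rw [← e1, ← e2]
  have key3 : P = T + S2 + qzeta q 3 := by rw [e3, piece1, piece2, piece3]
  rw [e4]
  linarith
end

section
/- Let 0<q<1 and let x and y be complex numbers with |x| < 1 and |y| < 1. Then Σ_{n>r>0} ζ[n] x^{n-r-1} y^{r-1} = Σ_{m=1}^∞ q^m/(([m]_q − x q^m)([m]_q − y q^m)), where the left-hand sum is over all pairs of integers n > r > 0 and both series converge absolutely. -/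
theorem tsum_pow_mul_pow_mul_pow_div_pow {𝕜 : Type*} [NormedField 𝕜] [CompleteSpace 𝕜]
    {Q c x y : 𝕜} (hx : ‖x * c‖ < ‖Q‖) (hy : ‖y * c‖ < ‖Q‖) :
    ∑' p : ℕ × ℕ, c ^ (p.1 + p.2 + 1) * x ^ p.1 * y ^ p.2 / Q ^ (p.1 + p.2 + 2) =
      c / ((Q - x * c) * (Q - y * c)) := by
  have hQ : Q ≠ 0 := norm_pos_iff.mp ((norm_nonneg _).trans_lt hx)
  have hxQ : ‖x * c / Q‖ < 1 := by rwa [norm_div, div_lt_one (norm_pos_iff.mpr hQ)]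
  have hyQ : ‖y * c / Q‖ < 1 := by rwa [norm_div, div_lt_one (norm_pos_iff.mpr hQ)]
  have hxc : Q - x * c ≠ 0 := sub_ne_zero.mpr fun h => hx.ne (by rw [h])
  have hyc : Q - y * c ≠ 0 := sub_ne_zero.mpr fun h => hy.ne (by rw [h])
  have hsplit : ∀ p : ℕ × ℕ, c ^ (p.1 + p.2 + 1) * x ^ p.1 * y ^ p.2 / Q ^ (p.1 + p.2 + 2) =
      (c / Q * (x * c / Q) ^ p.1) * (Q⁻¹ * (y * c / Q) ^ p.2) := by
    intro p
    rw [div_pow, div_pow]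
    field_simp
    ring
  have hsx : Summable fun s : ℕ => ‖c / Q * (x * c / Q) ^ s‖ := by
    simpa only [norm_mul, norm_pow] using
      (summable_geometric_of_lt_one (norm_nonneg _) hxQ).mul_left ‖c / Q‖
  have hsy : Summable fun r : ℕ => ‖Q⁻¹ * (y * c / Q) ^ r‖ := by
    simpa only [norm_mul, norm_pow] using
      (summable_geometric_of_lt_one (norm_nonneg _) hyQ).mul_left ‖Q⁻¹‖
  rw [tsum_congr hsplit, ← tsum_mul_tsum_of_summable_norm hsx hsy, tsum_mul_left, tsum_mul_left,
    tsum_geometric_of_norm_lt_one hxQ, tsum_geometric_of_norm_lt_one hyQ]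
  field_simp

theorem one_le_qnum_succ {q : ℝ} (hq0 : 0 ≤ q) (hq1 : q < 1) (k : ℕ) : 1 ≤ qnum q (k + 1) := by
  have : q ^ (k + 1) ≤ q := pow_le_of_le_one hq0 hq1.le k.succ_ne_zero
  rw [qnum, le_div_iff₀ (sub_pos.mpr hq1)]
  linarith

theorem norm_mul_pow_lt_qnum_succ {q : ℝ} (hq0 : 0 ≤ q) (hq1 : q < 1) {z : ℂ} (hz : ‖z‖ < 1)
    (k : ℕ) : ‖z * (q : ℂ) ^ (k + 1)‖ < ‖(qnum q (k + 1) : ℂ)‖ := by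
  have hQ := one_le_qnum_succ hq0 hq1 k
  rw [norm_mul, norm_pow, Complex.norm_real, Complex.norm_real, Real.norm_of_nonneg hq0,
    Real.norm_of_nonneg (by linarith)]
  calc ‖z‖ * q ^ (k + 1) ≤ ‖z‖ := mul_le_of_le_one_right (norm_nonneg z) (pow_le_one₀ hq0 hq1.le)
    _ < qnum q (k + 1) := hz.trans_le hQ

noncomputable def heightTerm (q : ℝ) (x y : ℂ) (p : ℕ × ℕ) (k : ℕ) : ℂ :=
  ((q : ℂ) ^ (k + 1)) ^ (p.1 + p.2 + 1) * x ^ p.1 * y ^ p.2 / (qnum q (k + 1) : ℂ) ^ (p.1 + p.2 + 2)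

theorem qzeta_mul_pow_mul_pow (q : ℝ) (x y : ℂ) (s r : ℕ) :
    (qzeta q (s + r + 2) : ℂ) * x ^ s * y ^ r = ∑' k, heightTerm q x y (s, r) k := by
  rw [qzeta, Complex.ofReal_tsum, ← tsum_mul_right, ← tsum_mul_right]
  refine tsum_congr fun k => ?_
  rw [heightTerm, ← pow_mul, mul_comm (k + 1)]
  push_cast
  ring

theorem norm_heightTerm_le {q : ℝ} (hq0 : 0 ≤ q) (hq1 : q < 1) (x y : ℂ) (p : ℕ × ℕ) (k : ℕ) :
    ‖heightTerm q x y p k‖ ≤ ‖x‖ ^ p.1 * ‖y‖ ^ p.2 * q ^ (k + 1) := by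
  have hQ := one_le_qnum_succ hq0 hq1 k
  rw [heightTerm, norm_div, norm_mul, norm_mul, norm_pow, norm_pow, norm_pow, norm_pow, norm_pow,
    Complex.norm_real, Complex.norm_real, Real.norm_of_nonneg hq0,
    Real.norm_of_nonneg (by linarith)]
  calc (q ^ (k + 1)) ^ (p.1 + p.2 + 1) * ‖x‖ ^ p.1 * ‖y‖ ^ p.2 / qnum q (k + 1) ^ (p.1 + p.2 + 2)
      ≤ (q ^ (k + 1)) ^ (p.1 + p.2 + 1) * ‖x‖ ^ p.1 * ‖y‖ ^ p.2 :=
        div_le_self (by positivity) (one_le_pow₀ hQ)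
    _ = ‖x‖ ^ p.1 * ‖y‖ ^ p.2 * (q ^ (k + 1)) ^ (p.1 + p.2 + 1) := by ring
    _ ≤ ‖x‖ ^ p.1 * ‖y‖ ^ p.2 * q ^ (k + 1) := by
        gcongr
        exact pow_le_of_le_one (by positivity) (pow_le_one₀ hq0 hq1.le) (Nat.succ_ne_zero _)

theorem summable_heightTerm {q : ℝ} (hq0 : 0 ≤ q) (hq1 : q < 1) {x y : ℂ} (hx : ‖x‖ < 1)
    (hy : ‖y‖ < 1) : Summable (Function.uncurry (heightTerm q x y)) := by
  have hxy : Summable fun p : ℕ × ℕ => ‖x‖ ^ p.1 * ‖y‖ ^ p.2 :=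
    (summable_geometric_of_lt_one (norm_nonneg x) hx).mul_of_nonneg
      (summable_geometric_of_lt_one (norm_nonneg y) hy) (fun _ => by positivity)
      (fun _ => by positivity)
  have hq : Summable fun k : ℕ => q ^ (k + 1) :=
    (summable_nat_add_iff 1).mpr (summable_geometric_of_lt_one hq0 hq1)
  refine Summable.of_norm_bounded (hxy.mul_of_nonneg hq (fun _ => by positivity)
    (fun _ => by positivity)) fun z => ?_
  exact norm_heightTerm_le hq0 hq1 x y z.1 z.2

def heightIndexEquiv : ℕ × ℕ ≃ {p : ℕ × ℕ // p.2 < p.1 ∧ 0 < p.2} where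
  toFun p := ⟨(p.1 + p.2 + 2, p.2 + 1), by omega⟩
  invFun p := (p.1.1 - p.1.2 - 1, p.1.2 - 1)
  left_inv p := by ext <;> simp only <;> omega
  right_inv p := by ext <;> simp only <;> omega

/-- The diagonal specialization `Φ₀[x,y,xy]` of the height generating function:
`Σ_{n>r>0} ζ[n] x^{n-r-1} y^{r-1} = Σ_{m≥1} q^m/(([m]_q - xq^m)([m]_q - yq^m))`. -/
theorem q_diagonal_height (q : ℝ) (hq0 : 0 < q) (hq1 : q < 1)
    (x y : ℂ) (hx : ‖x‖ < 1) (hy : ‖y‖ < 1) :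
    Summable (fun p : {p : ℕ × ℕ // p.2 < p.1 ∧ 0 < p.2} =>
        (qzeta q p.1.1 : ℂ) * x ^ (p.1.1 - p.1.2 - 1) * y ^ (p.1.2 - 1)) ∧
    Summable (fun m : ℕ => (q : ℂ) ^ (m + 1) /
        (((qnum q (m + 1) : ℂ) - x * (q : ℂ) ^ (m + 1)) *
          ((qnum q (m + 1) : ℂ) - y * (q : ℂ) ^ (m + 1)))) ∧
    (∑' p : {p : ℕ × ℕ // p.2 < p.1 ∧ 0 < p.2},
        (qzeta q p.1.1 : ℂ) * x ^ (p.1.1 - p.1.2 - 1) * y ^ (p.1.2 - 1))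
      = ∑' m : ℕ, (q : ℂ) ^ (m + 1) /
          (((qnum q (m + 1) : ℂ) - x * (q : ℂ) ^ (m + 1)) *
            ((qnum q (m + 1) : ℂ) - y * (q : ℂ) ^ (m + 1))) := by
  have hF := summable_heightTerm hq0.le hq1 hx hy
  have hLHS : ∀ p : ℕ × ℕ, (qzeta q (heightIndexEquiv p).1.1 : ℂ) *
      x ^ ((heightIndexEquiv p).1.1 - (heightIndexEquiv p).1.2 - 1) *
      y ^ ((heightIndexEquiv p).1.2 - 1) = ∑' k, heightTerm q x y p k := by
    rintro ⟨s, r⟩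
    have hs : s + r + 2 - (r + 1) - 1 = s := by omega
    simpa only [heightIndexEquiv, Equiv.coe_fn_mk, hs, Nat.add_sub_cancel] using
      qzeta_mul_pow_mul_pow q x y s r
  have hRHS : ∀ k : ℕ, ∑' p, heightTerm q x y p k = (q : ℂ) ^ (k + 1) /
      (((qnum q (k + 1) : ℂ) - x * (q : ℂ) ^ (k + 1)) *
        ((qnum q (k + 1) : ℂ) - y * (q : ℂ) ^ (k + 1))) := fun k =>
    tsum_pow_mul_pow_mul_pow_div_pow (norm_mul_pow_lt_qnum_succ hq0.le hq1 hx k)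
      (norm_mul_pow_lt_qnum_succ hq0.le hq1 hy k)
  refine ⟨heightIndexEquiv.summable_iff.mp (hF.prod.congr fun p => (hLHS p).symm),
    hF.prod_symm.prod.congr hRHS, ?_⟩
  rw [← heightIndexEquiv.tsum_eq, tsum_congr hLHS, ← hF.tsum_comm, tsum_congr hRHS]
end
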